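/- Let X ⊆ ℝ^d be a closed convex set containing 0, let g : ℝ^d → ℝ^d be α-strongly monotone and (β√n)-Lipschitz, let x* satisfy 0 ∈ g(x*) + N_X(x*), and for γ = 1 - δ ∈ (0,1) let x̃ satisfy 0 ∈ g(x̃) + N_{γX}(x̃). Then ‖x* - x̃‖ ≤ δ(1 + β√n/α)‖x*‖. -/
import Mathlib


open RealInnerProductSpace Pointwise

def normalCone {d : ℕ} (X : Set (EuclideanSpace ℝ (Fin d))) (x : EuclideanSpace ℝ (Fin d)) :
    Set (EuclideanSpace ℝ (Fin d)) :=
  {v | ∀ y ∈ X, ⟪v, y - x⟫ ≤ 0}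

theorem stmt4 {d : ℕ} (X : Set (EuclideanSpace ℝ (Fin d)))
    (hXcl : IsClosed X) (hXcv : Convex ℝ X) (h0 : (0 : EuclideanSpace ℝ (Fin d)) ∈ X)
    (g : EuclideanSpace ℝ (Fin d) → EuclideanSpace ℝ (Fin d))
    (α β δ : ℝ) (n : ℕ) (hα : 0 < α) (hβ : 0 ≤ β) (hδ : δ ∈ Set.Ioo (0 : ℝ) 1)
    (hmono : ∀ x y, α * ‖x - y‖ ^ 2 ≤ ⟪g x - g y, x - y⟫)
    (hlip : ∀ x y, ‖g x - g y‖ ≤ β * Real.sqrt n * ‖x - y‖)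
    (xstar xtil : EuclideanSpace ℝ (Fin d))
    (hxstar : xstar ∈ X) (hxstarEq : -g xstar ∈ normalCone X xstar)
    (hxtil : xtil ∈ (1 - δ) • X)
    (hxtilEq : -g xtil ∈ normalCone ((1 - δ) • X) xtil) :
    ‖xstar - xtil‖ ≤ δ * (1 + β * Real.sqrt n / α) * ‖xstar‖ := by
  obtain ⟨hδ0, hδ1⟩ := hδ
  have hγpos : 0 < 1 - δ := by linarith
  set y : EuclideanSpace ℝ (Fin d) := (1 - δ) • xstar with hy
  have hyX : y ∈ (1 - δ) • X := Set.smul_mem_smul_set hxstar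
  set v : EuclideanSpace ℝ (Fin d) := y - xtil with hv
  -- ⟪g xstar, v⟫ ≤ 0
  obtain ⟨u, huX, huEq⟩ := hxtil
  have h1 : ⟪g xstar, v⟫ ≤ 0 := by
    have h := hxstarEq u huX
    have heq : v = (1 - δ) • (xstar - u) := by
      rw [hv, hy, ← huEq, ← smul_sub]
    have hswap : (u : EuclideanSpace ℝ (Fin d)) - xstar = -(xstar - u) := by abel
    rw [hswap, inner_neg_left, inner_neg_right, neg_neg] at h
    rw [heq, real_inner_smul_right]
    nlinarith
  have h2 : 0 ≤ ⟪g xtil, v⟫ := by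
    have h := hxtilEq y hyX
    rw [inner_neg_left] at h
    have : y - xtil = v := rfl
    linarith [h]
  have key : α * ‖v‖ ^ 2 ≤ ⟪g y - g xstar, v⟫ := by
    have hm := hmono y xtil
    rw [inner_sub_left] at hm ⊢
    linarith
  have hlipb : ⟪g y - g xstar, v⟫ ≤ β * Real.sqrt n * (δ * ‖xstar‖) * ‖v‖ := by
    have hc := real_inner_le_norm (g y - g xstar) v
    have hl := hlip y xstar
    have hnys : ‖y - xstar‖ = δ * ‖xstar‖ := by
      have : y - xstar = (-δ) • xstar := by
        rw [hy]
        rw [sub_smul, one_smul, neg_smul]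
        abel
      rw [this, norm_smul]
      simp [abs_of_pos hδ0]
    rw [hnys] at hl
    calc ⟪g y - g xstar, v⟫ ≤ ‖g y - g xstar‖ * ‖v‖ := hc
      _ ≤ β * Real.sqrt n * (δ * ‖xstar‖) * ‖v‖ := by
          apply mul_le_mul_of_nonneg_right hl (norm_nonneg _)
  have hvb : ‖v‖ ≤ β * Real.sqrt n * δ * ‖xstar‖ / α := by
    rcases eq_or_lt_of_le (norm_nonneg v) with h | h
    · rw [← h]
      positivity
    · have : α * ‖v‖ ^ 2 ≤ β * Real.sqrt n * (δ * ‖xstar‖) * ‖v‖ := le_trans key hlipb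
      rw [le_div_iff₀ hα]
      nlinarith
  have htri : ‖xstar - xtil‖ ≤ ‖xstar - y‖ + ‖v‖ := by
    have : xstar - xtil = (xstar - y) + v := by rw [hv]; abel
    rw [this]
    exact norm_add_le _ _
  have hxy : ‖xstar - y‖ = δ * ‖xstar‖ := by
    have : xstar - y = δ • xstar := by
      rw [hy, sub_smul, one_smul]; abel
    rw [this, norm_smul]
    simp [abs_of_pos hδ0]
  have : δ * (1 + β * Real.sqrt n / α) * ‖xstar‖
      = δ * ‖xstar‖ + β * Real.sqrt n * δ * ‖xstar‖ / α := by
    field_simp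
  rw [this]
  linarith
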